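/- With n a positive integer and 0 ≤ m < n, the orthogonal VP polynomials q_{m,r}^n, defined in the variable t ∈ [0,π] by q_{m,r}^n(cos t) = cos(rt) for 0 ≤ r ≤ n−m, and q_{m,r}^n(cos t) = ((n+m−r)/(2m))cos(rt) + ((n−m−r)/(2m))cos((2n−r)t) for n−m < r < n, are pairwise orthogonal with respect to the inner product <F,G> = ∫_{-1}^{1} F(ξ)G(ξ)/√(1−ξ²) dξ: that is, <q_{m,r}^n, q_{m,r'}^n> = 0 for r ≠ r', 0 ≤ r, r' ≤ n−1. -/

import Mathlib

/-!
Under `ξ = cos θ` the Chebyshev weight turns the inner product into `∫₀^π F(cos θ) G(cos θ) dθ`,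
and `q_{m,r}^n(cos θ)` is a combination of `cos (r θ)` and `cos ((2n - r) θ)`. For distinct
`r, r' < n` the four frequencies `r, 2n - r, r', 2n - r'` are pairwise distinct, so every term
vanishes by the orthogonality of the Chebyshev polynomials `T_k(cos θ) = cos (k θ)`.
-/

/-- Orthogonal de la Vallée Poussin polynomial `q_{m,r}^n`, as a function of `ξ ∈ [-1,1]`,
defined via `ξ = cos t`, i.e. `t = arccos ξ`. -/
noncomputable def qVP (n m r : ℕ) (ξ : ℝ) : ℝ :=
  if r ≤ n - m then Real.cos (r * Real.arccos ξ)
  else ((n : ℝ) + m - r) / (2 * m) * Real.cos (r * Real.arccos ξ)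
      + ((n : ℝ) - m - r) / (2 * m) * Real.cos ((2 * (n : ℝ) - r) * Real.arccos ξ)

open Real Set intervalIntegral Polynomial.Chebyshev

lemma integral_div_sqrt_one_sub_sq_eq_integral_cos (f : ℝ → ℝ) :
    ∫ x in (-1 : ℝ)..1, f x / √(1 - x ^ 2) = ∫ θ in 0..π, f (cos θ) := by
  rw [← integral_measureT_eq_integral_cos, integral_measureT]
  simp only [div_eq_mul_inv, sqrt_inv]

lemma integral_cos_nat_mul_mul_cos_nat_mul_of_ne {a b : ℕ} (h : a ≠ b) :
    ∫ θ in 0..π, cos (a * θ) * cos (b * θ) = 0 := by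
  have := integral_eval_T_real_mul_eval_T_real_measureT_of_ne h
  rw [integral_measureT_eq_integral_cos] at this
  simpa only [T_real_cos, Int.cast_natCast] using this

lemma integral_two_cos_mul_two_cos_of_ne {a b c d : ℕ}
    (hac : a ≠ c) (had : a ≠ d) (hbc : b ≠ c) (hbd : b ≠ d) (α β γ δ : ℝ) :
    ∫ θ in 0..π, (α * cos (a * θ) + β * cos (b * θ)) * (γ * cos (c * θ) + δ * cos (d * θ))
      = 0 := by
  have hexpand : ∀ θ : ℝ,
      (α * cos (a * θ) + β * cos (b * θ)) * (γ * cos (c * θ) + δ * cos (d * θ))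
        = α * γ * (cos (a * θ) * cos (c * θ)) + α * δ * (cos (a * θ) * cos (d * θ))
          + β * γ * (cos (b * θ) * cos (c * θ)) + β * δ * (cos (b * θ) * cos (d * θ)) :=
    fun θ => by ring
  simp_rw [hexpand]
  rw [integral_add, integral_add, integral_add, integral_const_mul, integral_const_mul,
    integral_const_mul, integral_const_mul, integral_cos_nat_mul_mul_cos_nat_mul_of_ne hac,
    integral_cos_nat_mul_mul_cos_nat_mul_of_ne had, integral_cos_nat_mul_mul_cos_nat_mul_of_ne hbc,
    integral_cos_nat_mul_mul_cos_nat_mul_of_ne hbd]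
  · ring
  all_goals exact Continuous.intervalIntegrable (by fun_prop) _ _

lemma exists_qVP_cos_eq (n m r : ℕ) (hr : r ≤ 2 * n) :
    ∃ α β : ℝ, ∀ θ ∈ Icc 0 π,
      qVP n m r (cos θ) = α * cos (r * θ) + β * cos ((2 * n - r : ℕ) * θ) := by
  refine ⟨if r ≤ n - m then 1 else (n + m - r) / (2 * m),
    if r ≤ n - m then 0 else (n - m - r) / (2 * m), fun θ hθ => ?_⟩
  rw [qVP, arccos_cos hθ.1 hθ.2, Nat.cast_sub hr]
  split_ifs <;> push_cast <;> ring

theorem qVP_orthogonal_general (n m : ℕ) :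
    ∀ r r', r ≤ n - 1 → r' ≤ n - 1 → r ≠ r' →
      ∫ ξ in (-1 : ℝ)..1, qVP n m r ξ * qVP n m r' ξ / Real.sqrt (1 - ξ ^ 2) = 0 := by
  intro r r' hr hr' hne
  obtain ⟨α, β, hq⟩ := exists_qVP_cos_eq n m r (by omega)
  obtain ⟨γ, δ, hq'⟩ := exists_qVP_cos_eq n m r' (by omega)
  calc ∫ ξ in (-1 : ℝ)..1, qVP n m r ξ * qVP n m r' ξ / √(1 - ξ ^ 2)
      = ∫ θ in 0..π, qVP n m r (cos θ) * qVP n m r' (cos θ) :=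
        integral_div_sqrt_one_sub_sq_eq_integral_cos (fun ξ => qVP n m r ξ * qVP n m r' ξ)
    _ = ∫ θ in 0..π, (α * cos (r * θ) + β * cos ((2 * n - r : ℕ) * θ))
          * (γ * cos (r' * θ) + δ * cos ((2 * n - r' : ℕ) * θ)) :=
        intervalIntegral.integral_congr fun θ hθ => by
          rw [uIcc_of_le pi_pos.le] at hθ
          rw [hq θ hθ, hq' θ hθ]
    _ = 0 := integral_two_cos_mul_two_cos_of_ne hne (by omega) (by omega) (by omega) α β γ δ

theorem qVP_orthogonal (n m : ℕ) (hm : m < n) :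
    ∀ r r', r ≤ n - 1 → r' ≤ n - 1 → r ≠ r' →
      ∫ ξ in (-1 : ℝ)..1, qVP n m r ξ * qVP n m r' ξ / Real.sqrt (1 - ξ ^ 2) = 0 :=
  qVP_orthogonal_general n m
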